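/- For n ≥ 2 and positive reals a_1 ≤ a_2 ≤ ... ≤ a_n, equality of the cyclic sum ∑ a_i^{a_{i+1}} (indices mod n) with ∑ a_i^{a_i} holds if and only if a_1 = a_2 = ... = a_n. -/

import Mathlib

/-!
Let `M` be the largest `aᵢ`. Every cyclic term satisfies
`aᵢ ^ aᵢ₊₁ - aᵢ ^ aᵢ ≤ M ^ aᵢ₊₁ - M ^ aᵢ`, strictly when `aᵢ < aᵢ₊₁`: for `x < y` the map
`w ↦ w ^ y - w ^ x` is strictly increasing on `[x, ∞)` unless `x < 1 < y`, and in that case the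
left side is negative while the right side is nonnegative. The right-hand sides telescope to zero
around the cycle, so the cyclic sum is strictly smaller unless the sequence is constant.
-/

open Real Finset

theorem le_mul_rpow_sub_of_le_one {x y : ℝ} (hx : 0 < x) (hxy : x ≤ y) (hy : y ≤ 1) :
    x ≤ y * x ^ (y - x) := by
  have hamgm : x ^ (1 + x - y) * 1 ^ (y - x) ≤ (1 + x - y) * x + (y - x) * 1 :=
    geom_mean_le_arith_mean2_weighted (by linarith) (by linarith) hx.le zero_le_one (by ring)
  rw [one_rpow, mul_one, mul_one] at hamgm
  calc x = x ^ (1 + x - y) * x ^ (y - x) := by rw [← rpow_add hx]; norm_num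
    _ ≤ y * x ^ (y - x) := by gcongr; nlinarith

theorem lt_mul_rpow_sub {x y w : ℝ} (hx : 0 < x) (hxy : x < y) (hxw : x < w)
    (hyw : y ≤ 1 ∨ 1 ≤ w) : x < y * w ^ (y - x) := by
  rcases le_or_gt 1 w with hw | hw
  · nlinarith [one_le_rpow hw (sub_nonneg.2 hxy.le)]
  · have hy := hyw.resolve_right hw.not_ge
    calc x ≤ y * x ^ (y - x) := le_mul_rpow_sub_of_le_one hx hxy.le hy
      _ < y * w ^ (y - x) := by gcongr; linarith

theorem strictMonoOn_rpow_sub_rpow {x y : ℝ} (hx : 0 < x) (hxy : x < y) (hyx : y ≤ 1 ∨ 1 ≤ x) :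
    StrictMonoOn (fun w : ℝ => w ^ y - w ^ x) (Set.Ici x) := by
  have hcont : ContinuousOn (fun w : ℝ => w ^ y - w ^ x) (Set.Ici x) := by
    refine ContinuousOn.sub ?_ ?_ <;>
    exact continuousOn_id.rpow_const fun w hw => Or.inl (hx.trans_le hw).ne'
  refine strictMonoOn_of_deriv_pos (convex_Ici x) hcont fun w hw => ?_
  rw [interior_Ici, Set.mem_Ioi] at hw
  have hw0 : 0 < w := hx.trans hw
  have hderiv : HasDerivAt (fun w : ℝ => w ^ y - w ^ x) (y * w ^ (y - 1) - x * w ^ (x - 1)) w :=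
    (hasDerivAt_rpow_const (Or.inl hw0.ne')).sub (hasDerivAt_rpow_const (Or.inl hw0.ne'))
  have hkey := lt_mul_rpow_sub hx hxy hw (hyx.imp_right fun h => h.trans hw.le)
  rw [hderiv.deriv, sub_pos, show y - 1 = (y - x) + (x - 1) by ring, rpow_add hw0, ← mul_assoc]
  exact mul_lt_mul_of_pos_right hkey (rpow_pos_of_pos hw0 _)

theorem rpow_sub_rpow_lt_rpow_sub_rpow {x y z : ℝ} (hx : 0 < x) (hxy : x < y) (hyz : y ≤ z) :
    x ^ y - x ^ x < z ^ y - z ^ x := by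
  by_cases hyx : y ≤ 1 ∨ 1 ≤ x
  · have hxz := hxy.trans_le hyz
    exact strictMonoOn_rpow_sub_rpow hx hxy hyx Set.self_mem_Ici hxz.le hxz
  · push Not at hyx
    have h1 : x ^ y < x ^ x := rpow_lt_rpow_of_exponent_gt hx hyx.2 hxy
    have h2 : z ^ x ≤ z ^ y := rpow_le_rpow_of_exponent_le (by linarith) hxy.le
    linarith

theorem sum_rpow_perm_lt_sum_rpow_self {ι : Type*} [Fintype ι] (σ : Equiv.Perm ι) {a : ι → ℝ}
    {M : ℝ} (hpos : ∀ i, 0 < a i) (hM : ∀ i, a i ≤ M) (hstep : ∀ i, a i ≤ a (σ i) ∨ a i = M)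
    (hlt : ∃ i, a i < a (σ i)) :
    ∑ i, a i ^ a (σ i) < ∑ i, a i ^ a i := by
  have hle : ∀ i, a i ^ a (σ i) - a i ^ a i ≤ M ^ a (σ i) - M ^ a i := by
    intro i
    rcases hstep i with h | h
    · rcases h.eq_or_lt with h | h
      · rw [← h, sub_self, sub_self]
      · exact (rpow_sub_rpow_lt_rpow_sub_rpow (hpos i) h (hM _)).le
    · rw [h]
  obtain ⟨i₀, hi₀⟩ := hlt
  have hsum : ∑ i, (a i ^ a (σ i) + M ^ a i) < ∑ i, (a i ^ a i + M ^ a (σ i)) :=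
    sum_lt_sum (fun i _ => by linarith [hle i])
      ⟨i₀, mem_univ _, by linarith [rpow_sub_rpow_lt_rpow_sub_rpow (hpos i₀) hi₀ (hM _)]⟩
  rwa [sum_add_distrib, sum_add_distrib, Equiv.sum_comp σ (fun i => M ^ a i),
    add_lt_add_iff_right] at hsum

theorem Fin.eq_of_monotone_of_apply_finRotate_le {α : Type*} [PartialOrder α] {m : ℕ}
    {a : Fin (m + 1) → α} (hmono : Monotone a) (h : ∀ i, a (finRotate _ i) ≤ a i)
    (i j : Fin (m + 1)) : a i = a j := by
  have hanti : Antitone a := Fin.antitone_iff_succ_le.2 fun k => by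
    simpa [finRotate_of_lt k.isLt] using h k.castSucc
  rcases le_total i j with hij | hij
  · exact le_antisymm (hmono hij) (hanti hij)
  · exact le_antisymm (hanti hij) (hmono hij)

theorem stmt_2 (n : ℕ) (hn : 2 ≤ n) (a : Fin n → ℝ)
    (hpos : ∀ i, 0 < a i) (hmono : Monotone a) :
    ∑ i : Fin n, a i ^ a ⟨(i.val + 1) % n, Nat.mod_lt _ (by omega)⟩ =
      ∑ i : Fin n, a i ^ a i ↔ ∀ i j : Fin n, a i = a j := by
  obtain ⟨m, rfl⟩ : ∃ m, n = m + 2 := ⟨n - 2, by omega⟩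
  have hrot : ∀ i : Fin (m + 2),
      (⟨(i.val + 1) % (m + 2), Nat.mod_lt _ (by omega)⟩ : Fin (m + 2)) = finRotate _ i := by
    simp [Fin.ext_iff, Fin.val_add]
  simp only [hrot]
  constructor
  · intro hsum
    by_contra hne
    refine hsum.not_lt (sum_rpow_perm_lt_sum_rpow_self (finRotate _) hpos
      (fun i => hmono (Fin.le_last i)) (fun i => ?_) ?_)
    · rcases eq_or_ne i (Fin.last _) with rfl | hi
      · exact Or.inr rfl
      · exact Or.inl (hmono ((lt_finRotate_iff_ne_last i).2 hi).le)
    · by_contra hle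
      push Not at hle
      exact hne (Fin.eq_of_monotone_of_apply_finRotate_le hmono hle)
  · intro hall
    exact sum_congr rfl fun i _ => by rw [hall (finRotate _ i) i]
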